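/- arXiv:2408.07697 — 2 statements merged into one kernel-verified Lean document; each statement's English description precedes it below -/
import Mathlib

section
/- Let P1, P2 be propositional normal logic programs such that no atom occurring in P1 appears as the head of a rule of P2 (stratified definition assumption). Then M is an answer set of P1 ∪ P2 if and only if M = M1 ∪ M2 where M1 = M ∩ atoms(P1) is an answer set of P1 and M is an answer set of P2 ∪ fix(P1, M1), where fix(P1,M1) consists of the facts {a ← : a ∈ M1} together with the constraints {← a : a ∈ atoms(P1) \ M1}. -/
/-! Write `U = atoms(P1)`. The reduct of `P1 ∪ P2` by `M` is the union of the Horn programs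
`R1 = P1^M` and `R2 = P2^M`; `R1` depends on `M` only through `M ∩ U`, and the models of
`fix(P1, M ∩ U)` are exactly the `N` with `N ∩ U = M ∩ U`. Minimality then transfers in both
directions by editing a candidate model on `U` and off `U` separately: models of a Horn program
are closed under intersection, whether `N` is a model of `R1` depends only on `N ∩ U`, and since
no head of `P2` lies in `U`, atoms of `U` may be deleted from a model of `R2`. -/

/-- A propositional normal rule: optional head (none = constraint),
positive body atoms, negative body atoms. -/
structure Rule (A : Type) where
  head : Option A
  pos : Set A
  neg : Set A

/-- The body of a rule is true in interpretation `M`. -/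
def Rule.bodyTrue {A : Type} (r : Rule A) (M : Set A) : Prop :=
  r.pos ⊆ M ∧ ∀ a ∈ r.neg, a ∉ M

/-- A rule is satisfied by `M`. -/
def Rule.sat {A : Type} (r : Rule A) (M : Set A) : Prop :=
  r.bodyTrue M → ∃ a, r.head = some a ∧ a ∈ M

/-- `M` is a model of program `P`. -/
def isModel {A : Type} (P : Set (Rule A)) (M : Set A) : Prop :=
  ∀ r ∈ P, r.sat M

/-- The (GL/FLP) reduct of `P` w.r.t. `M`: keep rules whose negative body is
disjoint from `M`, deleting the negative literals. -/
def reduct {A : Type} (P : Set (Rule A)) (M : Set A) : Set (Rule A) :=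
  {r' | ∃ r ∈ P, (∀ a ∈ r.neg, a ∉ M) ∧ r' = ⟨r.head, r.pos, ∅⟩}

/-- `M` is an answer set (stable model) of `P`: it is the least model of the reduct. -/
def isAnswerSet {A : Type} (P : Set (Rule A)) (M : Set A) : Prop :=
  isModel (reduct P M) M ∧ ∀ N, isModel (reduct P M) N → M ⊆ N

/-- Atoms occurring in a rule. -/
def Rule.atoms {A : Type} (r : Rule A) : Set A :=
  {a | r.head = some a} ∪ r.pos ∪ r.neg

/-- Atoms occurring in a program. -/
def progAtoms {A : Type} (P : Set (Rule A)) : Set A :=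
  ⋃ r ∈ P, r.atoms

/-- Head atoms of a program. -/
def progHeads {A : Type} (P : Set (Rule A)) : Set A :=
  {a | ∃ r ∈ P, r.head = some a}

/-- The fact `a ←`. -/
def factRule {A : Type} (a : A) : Rule A := ⟨some a, ∅, ∅⟩

/-- The constraint `← a`. -/
def constraintRule {A : Type} (a : A) : Rule A := ⟨none, {a}, ∅⟩

/-- `fix(U, M)`: facts for the atoms of `U` in `M`, constraints for the atoms
of `U` not in `M`. -/
def fixProg {A : Type} (U : Set A) (M : Set A) : Set (Rule A) :=
  {r | ∃ a ∈ M ∩ U, r = factRule a} ∪ {r | ∃ a ∈ U \ M, r = constraintRule a}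

section Splitting

variable {A : Type} {P Q P1 P2 : Set (Rule A)} {M N K U W : Set A}

lemma isModel_union_iff : isModel (P ∪ Q) N ↔ isModel P N ∧ isModel Q N := by
  simp only [isModel, Set.mem_union, or_imp, forall_and]

lemma isModel_reduct_iff :
    isModel (reduct P M) N ↔
      ∀ r ∈ P, (∀ a ∈ r.neg, a ∉ M) → r.pos ⊆ N → ∃ a, r.head = some a ∧ a ∈ N := by
  simp only [isModel, reduct, Rule.sat, Rule.bodyTrue, Set.mem_ofPred_eq]
  constructor
  · intro h r hr hneg hpos
    exact h ⟨r.head, r.pos, ∅⟩ ⟨r, hr, hneg, rfl⟩ ⟨hpos, fun _ h => h.elim⟩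
  · rintro h _ ⟨r, hr, hneg, rfl⟩ ⟨hpos, -⟩
    exact h r hr hneg hpos

lemma reduct_union : reduct (P ∪ Q) M = reduct P M ∪ reduct Q M := by
  ext r'
  simp only [reduct, Set.mem_union, Set.mem_ofPred_eq, or_and_right, exists_or]

lemma reduct_inter_progAtoms : reduct P (M ∩ progAtoms P) = reduct P M := by
  ext r'
  simp only [reduct, Set.mem_ofPred_eq]
  refine exists_congr fun r => and_congr_right fun hr => and_congr_left fun _ =>
    forall₂_congr fun a ha => ?_
  have : a ∈ progAtoms P := Set.mem_biUnion hr (Or.inr ha)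
  simp [this]

lemma reduct_fixProg : reduct (fixProg U W) M = fixProg U W := by
  ext r'
  simp only [reduct, fixProg, Set.mem_union, Set.mem_ofPred_eq]
  constructor
  · rintro ⟨r, (⟨a, ha, rfl⟩ | ⟨a, ha, rfl⟩), -, rfl⟩
    exacts [Or.inl ⟨a, ha, rfl⟩, Or.inr ⟨a, ha, rfl⟩]
  · rintro (⟨a, ha, rfl⟩ | ⟨a, ha, rfl⟩)
    exacts [⟨_, Or.inl ⟨a, ha, rfl⟩, by simp [factRule], rfl⟩,
      ⟨_, Or.inr ⟨a, ha, rfl⟩, by simp [constraintRule], rfl⟩]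

lemma factRule_sat_iff {a : A} : (factRule a).sat N ↔ a ∈ N := by
  simp [Rule.sat, Rule.bodyTrue, factRule]

lemma constraintRule_sat_iff {a : A} : (constraintRule a).sat N ↔ a ∉ N := by
  simp [Rule.sat, Rule.bodyTrue, constraintRule]

lemma isModel_fixProg_iff : isModel (fixProg U W) N ↔ N ∩ U = W ∩ U := by
  have hfix : isModel (fixProg U W) N ↔ (∀ a ∈ W ∩ U, a ∈ N) ∧ ∀ a ∈ U \ W, a ∉ N := by
    constructor
    · intro h
      exact ⟨fun a ha => factRule_sat_iff.1 (h _ (Or.inl ⟨a, ha, rfl⟩)),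
        fun a ha => constraintRule_sat_iff.1 (h _ (Or.inr ⟨a, ha, rfl⟩))⟩
    · rintro ⟨hfact, hcon⟩ r (⟨a, ha, rfl⟩ | ⟨a, ha, rfl⟩)
      exacts [factRule_sat_iff.2 (hfact a ha), constraintRule_sat_iff.2 (hcon a ha)]
  rw [hfix, Set.ext_iff]
  simp only [Set.mem_inter_iff, Set.mem_sdiff]
  grind

lemma isModel_reduct_inter (hN : isModel (reduct P M) N) (hK : isModel (reduct P M) K) :
    isModel (reduct P M) (N ∩ K) := by
  rw [isModel_reduct_iff] at *
  intro r hr hneg hpos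
  obtain ⟨a, ha, haN⟩ := hN r hr hneg fun x hx => (hpos hx).1
  obtain ⟨b, hb, hbK⟩ := hK r hr hneg fun x hx => (hpos hx).2
  obtain rfl : a = b := Option.some_injective _ (ha.symm.trans hb)
  exact ⟨a, ha, haN, hbK⟩

lemma isModel_reduct_inter_progAtoms_iff :
    isModel (reduct P M) (N ∩ progAtoms P) ↔ isModel (reduct P M) N := by
  simp only [isModel_reduct_iff, Set.subset_inter_iff]
  refine forall₂_congr fun r hr => imp_congr_right fun _ => ?_
  have hpos : r.pos ⊆ progAtoms P := fun a ha => Set.mem_biUnion hr (Or.inl (Or.inr ha))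
  have hhead : ∀ a, r.head = some a → a ∈ progAtoms P :=
    fun a ha => Set.mem_biUnion hr (Or.inl (Or.inl ha))
  simp only [hpos, and_true, Set.mem_inter_iff]
  exact imp_congr_right fun _ => exists_congr fun a =>
    ⟨fun ⟨ha, haN, _⟩ => ⟨ha, haN⟩, fun ⟨ha, haN⟩ => ⟨ha, haN, hhead a ha⟩⟩

lemma isModel_reduct_of_subset_of_sdiff_subset (hU : U ∩ progHeads P = ∅)
    (hK : isModel (reduct P M) K) (hNK : N ⊆ K) (hKN : K \ U ⊆ N) :
    isModel (reduct P M) N := by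
  rw [isModel_reduct_iff] at *
  intro r hr hneg hpos
  obtain ⟨a, ha, haK⟩ := hK r hr hneg (hpos.trans hNK)
  have haU : a ∉ U := fun haU => (Set.eq_empty_iff_forall_notMem.mp hU) a ⟨haU, r, hr, ha⟩
  exact ⟨a, ha, hKN ⟨haK, haU⟩⟩

lemma inter_progAtoms_subset_of_isModel_reduct (hstrat : progAtoms P1 ∩ progHeads P2 = ∅)
    (h1 : isModel (reduct P1 M) M) (h2 : isModel (reduct P2 M) M)
    (hmin : ∀ N, isModel (reduct P1 M) N → isModel (reduct P2 M) N → M ⊆ N)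
    (hN : isModel (reduct P1 M) N) : M ∩ progAtoms P1 ⊆ N := by
  set N' := N ∩ M ∪ M \ progAtoms P1
  have hN'1 : isModel (reduct P1 M) N' := by
    rw [← isModel_reduct_inter_progAtoms_iff, Set.union_inter_distrib_right,
      Set.sdiff_inter_self, Set.union_empty, isModel_reduct_inter_progAtoms_iff]
    exact isModel_reduct_inter hN h1
  have hN'2 : isModel (reduct P2 M) N' :=
    isModel_reduct_of_subset_of_sdiff_subset hstrat h2
      (Set.union_subset Set.inter_subset_right Set.sdiff_subset) Set.subset_union_right
  rintro a ⟨haM, haU⟩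
  rcases hmin N' hN'1 hN'2 haM with h | h
  exacts [h.1, absurd haU h.2]

lemma subset_of_isModel_reduct_of_inter_progAtoms_eq
    (h1 : isModel (reduct P1 M) M) (h2 : isModel (reduct P2 M) M)
    (hmin : ∀ N, isModel (reduct P1 M) N → isModel (reduct P2 M) N → M ⊆ N)
    (hN : isModel (reduct P2 M) N) (hNU : N ∩ progAtoms P1 = M ∩ progAtoms P1) : M ⊆ N := by
  have hNM1 : isModel (reduct P1 M) (N ∩ M) := by
    rw [← isModel_reduct_inter_progAtoms_iff, Set.inter_right_comm, hNU, Set.inter_right_comm,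
      Set.inter_self, isModel_reduct_inter_progAtoms_iff]
    exact h1
  exact (hmin _ hNM1 (isModel_reduct_inter hN h2)).trans Set.inter_subset_left

lemma subset_of_isModel_reduct_union (hstrat : progAtoms P1 ∩ progHeads P2 = ∅)
    (hmin1 : ∀ N, isModel (reduct P1 M) N → M ∩ progAtoms P1 ⊆ N)
    (hmin2 : ∀ N, isModel (reduct P2 M) N → N ∩ progAtoms P1 = M ∩ progAtoms P1 → M ⊆ N)
    (hN1 : isModel (reduct P1 M) N) (hN2 : isModel (reduct P2 M) N) : M ⊆ N := by
  have hMU : M ∩ progAtoms P1 ⊆ N := hmin1 N hN1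
  set N' := N \ (progAtoms P1 \ M)
  have hN'2 : isModel (reduct P2 M) N' :=
    isModel_reduct_of_subset_of_sdiff_subset hstrat hN2 Set.sdiff_subset
      fun a ⟨haN, haU⟩ => ⟨haN, fun h => haU h.1⟩
  have hN'U : N' ∩ progAtoms P1 = M ∩ progAtoms P1 := by
    ext a
    have := @hMU a
    simp only [N', Set.mem_inter_iff, Set.mem_sdiff] at *
    tauto
  exact (hmin2 N' hN'2 hN'U).trans Set.sdiff_subset

end Splitting

/-- Collapse lemma for two uniform plain subprograms (stratified definition
assumption): if no atom of `P1` is a head of `P2`, then `M` is an answer set of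
`P1 ∪ P2` iff `M1 = M ∩ atoms(P1)` is an answer set of `P1` and `M` is an
answer set of `P2 ∪ fix(P1, M1)`. -/
theorem union_answerSet_iff_fix {A : Type} (P1 P2 : Set (Rule A))
    (hstrat : progAtoms P1 ∩ progHeads P2 = ∅) (M : Set A) :
    isAnswerSet (P1 ∪ P2) M ↔
      (isAnswerSet P1 (M ∩ progAtoms P1) ∧
        isAnswerSet (P2 ∪ fixProg (progAtoms P1) (M ∩ progAtoms P1)) M) := by
  simp only [isAnswerSet, reduct_union, reduct_fixProg, reduct_inter_progAtoms,
    isModel_reduct_inter_progAtoms_iff, isModel_union_iff, isModel_fixProg_iff,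
    Set.inter_assoc, Set.inter_self, and_imp]
  constructor
  · rintro ⟨⟨h1, h2⟩, hmin⟩
    exact ⟨⟨h1, fun N => inter_progAtoms_subset_of_isModel_reduct hstrat h1 h2 hmin⟩,
      ⟨h2, trivial⟩,
      fun N => subset_of_isModel_reduct_of_inter_progAtoms_eq h1 h2 hmin⟩
  · rintro ⟨⟨h1, hmin1⟩, ⟨h2, -⟩, hmin2⟩
    exact ⟨⟨h1, h2⟩, fun N => subset_of_isModel_reduct_union hstrat hmin1 hmin2⟩
end

section
/- If the last component program P_n of an ASP^ω(Q) program is plain, then Algorithm 1 (the rewriting via col_1–col_5) yields an equi-coherent quantifier-alternating plain ASP(Q) program with at most n quantifiers; in general for arbitrary ASP^ω(Q) programs it yields one with at most n+1 quantifiers. Abstractly: any word over {∃,∀} of length n, where each letter may carry a 'weak' mark, can be rewritten by the operations (i) merge two adjacent equal unmarked letters into one, and (ii) replace a marked letter Q (followed only by an alternating suffix of unmarked letters) by the unmarked letter Q followed—only if Q ended the word—by one extra letter of the opposite kind, into an alternating unmarked word of length at most n+1, and of length at most n when the last letter is unmarked; moreover the process terminates. -/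
/-- A quantifier letter: first component is the quantifier (`true` = ∃,
`false` = ∀), second component is the mark (`true` = carries weak
constraints, `false` = plain). -/
abbrev QLetter := Bool × Bool

/-- A quantifier prefix. -/
abbrev QWord := List QLetter

/-- The word is quantifier-alternating. -/
def QAlt (w : QWord) : Prop := w.Chain' (fun a b => a.1 ≠ b.1)

/-- All letters of the word are unmarked (plain). -/
def QPlain (w : QWord) : Prop := ∀ x ∈ w, x.2 = false

/-- One rewriting step of Algorithm 1, abstracted:
(i) merge two adjacent equal unmarked letters;
(ii) unmark a marked letter followed by a nonempty alternating unmarked suffix;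
(iii) unmark a marked letter ending the word, appending one extra letter of the
opposite kind. -/
inductive QStep : QWord → QWord → Prop
  | merge (u v : QWord) (q : Bool) :
      QStep (u ++ (q, false) :: (q, false) :: v) (u ++ (q, false) :: v)
  | unmark (u v : QWord) (q : Bool) (hne : v ≠ []) (halt : QAlt v) (hpl : QPlain v) :
      QStep (u ++ (q, true) :: v) (u ++ (q, false) :: v)
  | unmarkLast (u : QWord) (q : Bool) :
      QStep (u ++ [(q, true)]) (u ++ [(q, false), (!q, false)])

/-!
Each step lowers `length + 2 * (number of marked letters)`, which gives termination.
For the normal form, fold the word from the right, prepending one letter at a time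
to an already alternating plain word `v` (`consNormal`): an unmarked letter is either
merged into the head of `v` or prepended; a marked letter is first unmarked (by the
rule for a nonempty suffix, or the rule that appends the opposite quantifier if `v = []`)
and then treated the same way. So every letter except the last one adds at most one
letter, and the last one adds two only if it is marked.
-/

namespace QStep

def weight (w : QWord) : ℕ := w.length + 2 * w.countP (·.2)

theorem weight_lt {w w' : QWord} (h : QStep w w') : weight w' < weight w := by
  cases h <;> simp [weight, List.countP_append]; omega

theorem wellFounded_flip : WellFounded (flip QStep) :=
  Subrelation.wf (fun h => weight_lt h) (measure weight).wf

theorem cons {v v' : QWord} (a : QLetter) (h : QStep v v') : QStep (a :: v) (a :: v') := by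
  cases h with
  | merge u w q => exact merge (a :: u) w q
  | unmark u w q hne halt hpl => exact unmark (a :: u) w q hne halt hpl
  | unmarkLast u q => exact unmarkLast (a :: u) q

theorem reflTransGen_cons {v v' : QWord} (a : QLetter)
    (h : Relation.ReflTransGen QStep v v') : Relation.ReflTransGen QStep (a :: v) (a :: v') :=
  Relation.ReflTransGen.lift (a :: ·) (fun _ _ hs => QStep.cons a hs) _ _ h

end QStep

def consNormal (l : QLetter) : QWord → QWord
  | [] => if l.2 then [(l.1, false), (!l.1, false)] else [(l.1, false)]
  | (p, b) :: v => if p = l.1 then (p, b) :: v else (l.1, false) :: (p, b) :: v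

theorem consNormal_ne_nil (l : QLetter) (v : QWord) : consNormal l v ≠ [] := by
  rcases v with _ | ⟨⟨p, b⟩, v⟩ <;> simp only [consNormal] <;> split_ifs <;> simp

theorem qAlt_consNormal {v : QWord} (l : QLetter) (hv : QAlt v) : QAlt (consNormal l v) := by
  rcases v with _ | ⟨⟨p, b⟩, v⟩ <;> simp only [consNormal] <;> split_ifs with h
  · exact List.isChain_pair.2 (by simp)
  · exact List.isChain_singleton _
  · exact hv
  · exact List.isChain_cons_cons.2 ⟨Ne.symm h, hv⟩

theorem qPlain_consNormal {v : QWord} (l : QLetter) (hv : QPlain v) :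
    QPlain (consNormal l v) := by
  rcases v with _ | ⟨⟨p, b⟩, v⟩ <;> simp only [consNormal] <;> split_ifs
  · simp [QPlain]
  · simp [QPlain]
  · exact hv
  · simpa [QPlain] using hv

theorem length_consNormal_le {v : QWord} (l : QLetter) (hv : v ≠ []) :
    (consNormal l v).length ≤ v.length + 1 := by
  obtain ⟨⟨p, b⟩, v, rfl⟩ := List.exists_cons_of_ne_nil hv
  simp only [consNormal]
  split_ifs <;> simp

theorem reflTransGen_consNormal {v : QWord} (l : QLetter) (halt : QAlt v) (hpl : QPlain v) :
    Relation.ReflTransGen QStep (l :: v) (consNormal l v) := by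
  obtain ⟨q, m⟩ := l
  rcases v with _ | ⟨⟨p, b⟩, v⟩
  · cases m
    · exact .refl
    · exact .single (QStep.unmarkLast [] q)
  obtain rfl : b = false := hpl _ List.mem_cons_self
  have hunmark : Relation.ReflTransGen QStep ((q, m) :: (p, false) :: v)
      ((q, false) :: (p, false) :: v) := by
    cases m
    · exact .refl
    · exact .single (QStep.unmark [] _ q (List.cons_ne_nil _ _) halt hpl)
  simp only [consNormal]
  split_ifs with h
  · subst h
    exact hunmark.tail (QStep.merge [] v p)
  · exact hunmark

theorem qAlt_foldr_consNormal {v : QWord} (u : QWord) (hv : QAlt v) :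
    QAlt (u.foldr consNormal v) := by
  induction u with
  | nil => exact hv
  | cons l u ih => exact qAlt_consNormal l ih

theorem qPlain_foldr_consNormal {v : QWord} (u : QWord) (hv : QPlain v) :
    QPlain (u.foldr consNormal v) := by
  induction u with
  | nil => exact hv
  | cons l u ih => exact qPlain_consNormal l ih

theorem reflTransGen_foldr_consNormal {v : QWord} (u : QWord) (halt : QAlt v)
    (hpl : QPlain v) : Relation.ReflTransGen QStep (u ++ v) (u.foldr consNormal v) := by
  induction u with
  | nil => exact .refl
  | cons l u ih =>
    exact (QStep.reflTransGen_cons l ih).trans <|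
      reflTransGen_consNormal l (qAlt_foldr_consNormal u halt) (qPlain_foldr_consNormal u hpl)

theorem length_foldr_consNormal_le {v : QWord} (u : QWord) (hv : v ≠ []) :
    (u.foldr consNormal v).length ≤ u.length + v.length := by
  induction u with
  | nil => simp
  | cons l u ih =>
    have hne : u.foldr consNormal v ≠ [] := by
      cases u with
      | nil => exact hv
      | cons l' u => exact consNormal_ne_nil l' _
    have := length_consNormal_le l hne
    simp only [List.foldr_cons, List.length_cons]
    omega

theorem length_foldr_consNormal_concat_le (u : QWord) (x : QLetter) :
    ((u ++ [x]).foldr consNormal []).length ≤ u.length + if x.2 then 2 else 1 := by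
  rw [List.foldr_append]
  have hx : ([x].foldr consNormal []).length = if x.2 then 2 else 1 := by
    simp only [List.foldr, consNormal]; split <;> simp
  have := length_foldr_consNormal_le u (v := [x].foldr consNormal [])
    (consNormal_ne_nil x [])
  omega

/-- Convergence of the rewriting: the rewriting terminates, and every word of
length `n` rewrites to an alternating unmarked word of length at most `n + 1`,
and of length at most `n` whenever its last letter is unmarked. -/
theorem qword_rewriting_convergence :
    (∀ f : ℕ → QWord, ¬ ∀ n : ℕ, QStep (f n) (f (n + 1))) ∧
    (∀ w : QWord, ∃ w' : QWord,
      Relation.ReflTransGen QStep w w' ∧ QAlt w' ∧ QPlain w' ∧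
      w'.length ≤ w.length + 1 ∧
      (∀ x : QLetter, w.getLast? = some x → x.2 = false →
        w'.length ≤ w.length)) := by
  refine ⟨fun f hf => (wellFounded_iff_isEmpty_descending_chain.1 QStep.wellFounded_flip).false
    ⟨f, hf⟩, fun w => ⟨w.foldr consNormal [], ?_, ?_, ?_, ?_⟩⟩
  · simpa using reflTransGen_foldr_consNormal w (v := []) List.isChain_nil (by simp [QPlain])
  · exact qAlt_foldr_consNormal w List.isChain_nil
  · exact qPlain_foldr_consNormal w (by simp [QPlain])
  obtain rfl | ⟨u, x, rfl⟩ := w.eq_nil_or_concat'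
  · simp
  have hlen := length_foldr_consNormal_concat_le u x
  rw [List.length_append, List.length_singleton]
  refine ⟨by split_ifs at hlen <;> omega, fun y hy hy2 => ?_⟩
  obtain rfl : x = y := by simpa using hy
  rw [if_neg (by simp [hy2])] at hlen
  omega
end
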